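/- arXiv:1107.4466 — 3 statements merged into one kernel-verified Lean document; each statement's English description precedes it below -/
import Mathlib

section
/- For any square matrix A over a commutative ring R of size n×n, the hafnian of the 2n×2n block matrix [[0, A],[Aᵀ, 0]] equals the permanent of A. -/
open scoped Classical
open Matrix

/-! Index the rows of `[[0, A], [Aᵀ, 0]]` by `Fin n ⊕ Fin n`. A perfect matching that pairs two
indices of the same half contributes zero, because the entry at that pair lies in a zero block.
The remaining matchings are exactly the `crossPerm π`, pairing `inl i` with `inr (π i)` for a
permutation `π`, and `crossPerm π` contributes `∏ i, A i (π i)`. -/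

/-- The hafnian of an `m × m` matrix: the sum over all perfect matchings of
`{0,…,m-1}` (encoded as fixed-point-free involutions) of the product of the
entries over the matched pairs. (If `m` is odd there are no such matchings.) -/
noncomputable def hafnian {R : Type*} [CommRing R] {m : ℕ}
    (B : Matrix (Fin m) (Fin m) R) : R :=
  ∑ σ ∈ Finset.univ.filter (fun σ : Equiv.Perm (Fin m) => σ * σ = 1 ∧ ∀ i, σ i ≠ i),
    ∏ i ∈ Finset.univ.filter (fun i : Fin m => (i : ℕ) < (σ i : ℕ)), B i (σ i)

open Equiv Finset

noncomputable def perfectMatchings (ι : Type*) [Fintype ι] : Finset (Perm ι) :=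
  univ.filter fun τ => τ * τ = 1 ∧ ∀ x, τ x ≠ x

lemma mem_perfectMatchings {ι : Type*} [Fintype ι] {τ : Perm ι} :
    τ ∈ perfectMatchings ι ↔ τ * τ = 1 ∧ ∀ x, τ x ≠ x := by
  simp [perfectMatchings]

section CrossPerm

variable {α β : Type*}

def crossPerm (π : α ≃ β) : Perm (α ⊕ β) :=
  (π.sumCongr π.symm).trans (Equiv.sumComm β α)

@[simp]
lemma crossPerm_inl (π : α ≃ β) (a : α) : crossPerm π (Sum.inl a) = Sum.inr (π a) := rfl

@[simp]
lemma crossPerm_inr (π : α ≃ β) (b : β) :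
    crossPerm π (Sum.inr b) = Sum.inl (π.symm b) :=
  rfl

lemma crossPerm_injective : Function.Injective (crossPerm : (α ≃ β) → Perm (α ⊕ β)) := by
  intro π π' h
  ext a
  simpa using congr($h (Sum.inl a))

lemma crossPerm_mem_perfectMatchings [Fintype α] [Fintype β] (π : α ≃ β) :
    crossPerm π ∈ perfectMatchings (α ⊕ β) := by
  refine mem_perfectMatchings.2 ⟨?_, fun x => ?_⟩
  · ext (a | b) <;> simp
  · cases x <;> simp

lemma exists_crossPerm_eq {τ : Perm (α ⊕ β)} (hτ : τ * τ = 1)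
    (hl : ∀ a a', τ (Sum.inl a) ≠ Sum.inl a') (hr : ∀ b b', τ (Sum.inr b) ≠ Sum.inr b') :
    ∃ π, crossPerm π = τ := by
  have hττ (x : α ⊕ β) : τ (τ x) = x := congr($hτ x)
  have hl' (a : α) : ∃ b, τ (Sum.inl a) = Sum.inr b := by
    cases h : τ (Sum.inl a) with
    | inl a' => exact absurd h (hl a a')
    | inr b => exact ⟨b, rfl⟩
  have hr' (b : β) : ∃ a, τ (Sum.inr b) = Sum.inl a := by
    cases h : τ (Sum.inr b) with
    | inl a => exact ⟨a, rfl⟩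
    | inr b' => exact absurd h (hr b b')
  choose f hf using hl'
  choose g hg using hr'
  have hgf (a : α) : g (f a) = a := Sum.inl_injective (β := β) (by rw [← hg, ← hf, hττ])
  have hfg (b : β) : f (g b) = b := Sum.inr_injective (α := α) (by rw [← hf, ← hg, hττ])
  exact ⟨⟨f, g, hgf, hfg⟩, by ext (a | b) <;> simp [hf, hg]⟩

end CrossPerm

section Matchings

variable {ι : Type*} [Fintype ι] {m : ℕ}

lemma hafnian_submatrix_symm_eq_sum {R : Type*} [CommRing R] (M : Matrix ι ι R)
    (e : ι ≃ Fin m) :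
    hafnian (M.submatrix e.symm e.symm) =
      ∑ τ ∈ perfectMatchings ι,
        ∏ x ∈ univ.filter (fun x => e x < e (τ x)), M x (τ x) := by
  refine (sum_equiv e.permCongr (fun τ => ?_) (fun τ _ => ?_)).symm
  · have h1 : e.permCongr τ * e.permCongr τ = 1 ↔ τ * τ = 1 := by
      rw [← Equiv.permCongr_mul]; exact (e.permCongrHom).map_eq_one_iff
    have h2 : (∀ x, τ x ≠ x) ↔ ∀ i, e.permCongr τ i ≠ i :=
      e.forall_congr_left.trans (by simp [Equiv.permCongr_apply, ← e.eq_symm_apply])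
    simp only [mem_perfectMatchings, mem_filter, mem_univ, true_and, h1, ← h2]
  · refine prod_equiv e (fun x => ?_) (fun x _ => ?_)
    · rw [mem_filter_univ, mem_filter_univ, Equiv.permCongr_apply, Equiv.symm_apply_apply]
      rfl
    · simp

lemma prod_filter_lt_eq_zero {R : Type*} [CommMonoidWithZero R] (M : Matrix ι ι R)
    (e : ι ≃ Fin m) {τ : Perm ι} (hτ : τ * τ = 1) {x : ι} (hx : τ x ≠ x)
    (h₁ : M x (τ x) = 0) (h₂ : M (τ x) x = 0) :
    ∏ y ∈ univ.filter (fun y => e y < e (τ y)), M y (τ y) = 0 := by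
  have hττ : τ (τ x) = x := congr($hτ x)
  rcases lt_or_gt_of_ne (e.injective.ne hx.symm) with h | h
  · exact prod_eq_zero (mem_filter.2 ⟨mem_univ _, h⟩) h₁
  · refine prod_eq_zero (i := τ x) (mem_filter.2 ⟨mem_univ _, ?_⟩) ?_ <;> rwa [hττ]

end Matchings

lemma prod_fromBlocks_zero_zero_eq_zero {R : Type*} [CommMonoidWithZero R] {α β : Type*}
    [Fintype α] [Fintype β] {k : ℕ} (A : Matrix α β R) (B : Matrix β α R)
    (e : α ⊕ β ≃ Fin k) {τ : Perm (α ⊕ β)} (hτ : τ ∈ perfectMatchings (α ⊕ β))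
    (hcross : τ ∉ Set.range crossPerm) :
    ∏ x ∈ univ.filter (fun x => e x < e (τ x)), fromBlocks 0 A B 0 x (τ x) = 0 := by
  obtain ⟨hττ, hfix⟩ := mem_perfectMatchings.1 hτ
  obtain ⟨a, a', h⟩ | ⟨b, b', h⟩ :
      (∃ a a', τ (Sum.inl a) = Sum.inl a') ∨ ∃ b b', τ (Sum.inr b) = Sum.inr b' := by
    by_contra! h
    exact hcross (exists_crossPerm_eq hττ h.1 h.2)
  · refine prod_filter_lt_eq_zero _ e hττ (hfix (Sum.inl a)) ?_ ?_ <;> simp [h]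
  · refine prod_filter_lt_eq_zero _ e hττ (hfix (Sum.inr b)) ?_ ?_ <;> simp [h]

lemma filter_finSumFinEquiv_lt_crossPerm {m n : ℕ} (π : Fin m ≃ Fin n) :
    univ.filter (fun x => finSumFinEquiv x < finSumFinEquiv (crossPerm π x)) =
      univ.map Function.Embedding.inl := by
  have (i : Fin m) (j : Fin n) : Fin.castAdd n i < Fin.natAdd m j := by
    rw [Fin.lt_def, Fin.val_castAdd, Fin.val_natAdd]
    omega
  ext (a | b)
  · simpa using this a (π a)
  · simpa using (this (π.symm b) b).le

/-- The hafnian of the block matrix `[[0, A],[Aᵀ, 0]]` equals the permanent of `A`. -/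
theorem hafnian_fromBlocks_eq_permanent {R : Type*} [CommRing R] {n : ℕ}
    (A : Matrix (Fin n) (Fin n) R) :
    hafnian ((Matrix.fromBlocks 0 A Aᵀ 0).submatrix finSumFinEquiv.symm finSumFinEquiv.symm)
      = A.permanent := by
  have hsub : univ.image crossPerm ⊆ perfectMatchings (Fin n ⊕ Fin n) :=
    image_subset_iff.2 fun π _ => crossPerm_mem_perfectMatchings π
  rw [hafnian_submatrix_symm_eq_sum, ← permanent_transpose, permanent,
    ← sum_subset hsub, sum_image crossPerm_injective.injOn]
  · refine sum_congr rfl fun π _ => ?_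
    rw [filter_finSumFinEquiv_lt_crossPerm, prod_map]
    simp
  · intro τ hτ hτπ
    exact prod_fromBlocks_zero_zero_eq_zero A Aᵀ _ hτ (by simpa using hτπ)
end

section
/- Let e_1,…,e_k ∈ R[U_n] and define for each subset X the ranked zeta transform ê_i,X(r) = Σ_{Y ⊆ X} (e_i)_Y r^{|Y|} ∈ R[r]. Then the coefficient of [n] in e_1·e_2⋯e_k equals the coefficient of r^n in Σ_{X ⊆ [n]} (-1)^{n-|X|} Π_{i=1}^k ê_i,X(r). -/
/-!
Expanding the product gives `∏ᵢ ê_{i,X}(r) = Σ ∏ᵢ e_i(Y_i) r^{Σ|Y_i|}` over tuples with all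
`Y_i ⊆ X`; grouping the tuples by their union `U` writes it as `Σ_{U ⊆ X} g(U)`, where `g(U)`
sums over the tuples covering `U`. Möbius inversion on the Boolean lattice turns the alternating
sum over `X` into `g([n])`. Since `Σ|Y_i| ≥ |⋃ Y_i|`, with equality exactly when the `Y_i` are
pairwise disjoint, the coefficient of `r^n` in `g([n])` is the sum over ordered partitions of `[n]`
into `k` possibly empty blocks, which is the expansion of `e_1 ⋯ e_k` at `[n]`.
-/

open scoped Classical
open Polynomial

/-- Convolution product on `R[U_n]`: `(e·f)_X = Σ_{Y ⊆ X} e_Y f_{X∖Y}`. -/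
noncomputable def convMul {R : Type*} [CommRing R] {n : ℕ}
    (e f : Finset (Fin n) → R) : Finset (Fin n) → R :=
  fun X => ∑ Y ∈ X.powerset, e Y * f (X \ Y)

/-- The multiplicative identity `1[∅]` of `R[U_n]`. -/
noncomputable def convOne {R : Type*} [CommRing R] {n : ℕ} : Finset (Fin n) → R :=
  fun X => if X = ∅ then 1 else 0

/-- The product `e_1 · e_2 ⋯ e_k` in `R[U_n]` of a list of elements. -/
noncomputable def convProd {R : Type*} [CommRing R] {n : ℕ}
    (l : List (Finset (Fin n) → R)) : Finset (Fin n) → R :=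
  l.foldr convMul convOne

/-- The ranked zeta transform `ê_X(r) = Σ_{Y ⊆ X} e_Y r^{|Y|}`. -/
noncomputable def rankedZeta {R : Type*} [CommRing R] {n : ℕ}
    (e : Finset (Fin n) → R) (X : Finset (Fin n)) : Polynomial R :=
  ∑ Y ∈ X.powerset, Polynomial.C (e Y) * Polynomial.X ^ Y.card

open Finset

section Moebius

variable {α S : Type*} [Fintype α] [DecidableEq α] [Ring S]

theorem sum_superset_neg_one_pow_card_compl (U : Finset α) :
    ∑ X with U ⊆ X, (-1 : S) ^ #Xᶜ = if U = univ then 1 else 0 := by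
  have hreindex : ∑ X with U ⊆ X, (-1 : S) ^ #Xᶜ = ∑ W ∈ Uᶜ.powerset, (-1 : S) ^ #W :=
    sum_nbij' compl compl (by simp) (by simp [subset_compl_comm]) (by simp) (by simp) (by simp)
  rw [hreindex]
  simpa [compl_eq_empty_iff] using
    congrArg (Int.cast : ℤ → S) (sum_powerset_neg_one_pow_card (x := Uᶜ))

theorem sum_neg_one_pow_card_compl_mul_sum_powerset (f : Finset α → S) :
    ∑ X, (-1 : S) ^ #Xᶜ * ∑ U ∈ X.powerset, f U = f univ := by
  calc ∑ X, (-1 : S) ^ #Xᶜ * ∑ U ∈ X.powerset, f U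
      = ∑ U, ∑ X with U ⊆ X, (-1 : S) ^ #Xᶜ * f U := by
        simp_rw [mul_sum]
        exact sum_comm' (by simp)
    _ = f univ := by
        simp_rw [← sum_mul, sum_superset_neg_one_pow_card_compl, ite_mul, one_mul, zero_mul]
        exact Fintype.sum_ite_eq' _ _

end Moebius

section DisjointCover

variable {α ι : Type*} [DecidableEq α]

-- Given the union, the cardinality condition says exactly that the pieces are pairwise disjoint.
def IsDisjointCover [Fintype ι] (Y : ι → Finset α) (X : Finset α) : Prop :=
  univ.sup Y = X ∧ ∑ i, #(Y i) = #X

theorem card_univ_sup_le_sum [Fintype ι] (Y : ι → Finset α) : #(univ.sup Y) ≤ ∑ i, #(Y i) := by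
  rw [sup_eq_biUnion]
  exact card_biUnion_le

theorem Fin.univ_sup_cons {k : ℕ} (Z : Finset α) (Y : Fin k → Finset α) :
    univ.sup (Fin.cons Z Y : Fin (k + 1) → Finset α) = Z ∪ univ.sup Y := by
  rw [Fin.univ_succ, sup_cons, Fin.cons_zero, sup_map]
  rfl

theorem isDisjointCover_zero (Y : Fin 0 → Finset α) (X : Finset α) :
    IsDisjointCover Y X ↔ X = ∅ := by
  simp [IsDisjointCover, eq_comm]

theorem isDisjointCover_cons {k : ℕ} {Z X : Finset α} {Y : Fin k → Finset α} :
    IsDisjointCover (Fin.cons Z Y : Fin (k + 1) → Finset α) X ↔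
      Z ⊆ X ∧ IsDisjointCover Y (X \ Z) := by
  rw [IsDisjointCover, IsDisjointCover, Fin.univ_sup_cons, Fin.sum_univ_succ]
  simp only [Fin.cons_zero, Fin.cons_succ]
  have hS := card_univ_sup_le_sum Y
  constructor
  · rintro ⟨hX, hcard⟩
    subst hX
    have hunion := card_union_le Z (univ.sup Y)
    have hdisj : Disjoint Z (univ.sup Y) := card_union_eq_card_add_card.1 (by omega)
    refine ⟨subset_union_left, (union_sdiff_cancel_left hdisj).symm, ?_⟩
    rw [union_sdiff_cancel_left hdisj]
    omega
  · rintro ⟨hZX, hX, hcard⟩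
    refine ⟨by rw [hX, union_sdiff_of_subset hZX], ?_⟩
    rw [hcard, card_sdiff_of_subset hZX]
    have := card_le_card hZX
    omega

end DisjointCover

section RankedCover

variable {R : Type*} [CommRing R] {n k : ℕ}

theorem convProd_ofFn_apply (e : Fin k → Finset (Fin n) → R) (X : Finset (Fin n)) :
    convProd (List.ofFn e) X =
      ∑ Y : Fin k → Finset (Fin n) with IsDisjointCover Y X, ∏ i, e i (Y i) := by
  induction k generalizing X with
  | zero => by_cases hX : X = ∅ <;> simp [convProd, convOne, isDisjointCover_zero, hX]
  | succ k ih =>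
    calc convProd (List.ofFn e) X
        = ∑ Z ∈ X.powerset, e 0 Z *
            ∑ Y : Fin k → Finset (Fin n) with IsDisjointCover Y (X \ Z), ∏ i, e i.succ (Y i) := by
          simp only [List.ofFn_succ, ← ih]
          rfl
      _ = ∑ p : Finset (Fin n) × (Fin k → Finset (Fin n)) with
            IsDisjointCover (Fin.cons p.1 p.2 : Fin (k + 1) → Finset (Fin n)) X,
            ∏ i, e i ((Fin.cons p.1 p.2 : Fin (k + 1) → Finset (Fin n)) i) := by
          rw [sum_filter, Fintype.sum_prod_type, ← Fintype.sum_extend_by_zero]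
          refine sum_congr rfl fun Z _ => ?_
          by_cases hZ : Z ⊆ X
          · simp [hZ, isDisjointCover_cons, mul_sum, sum_filter, Fin.prod_univ_succ]
          · simp [hZ, isDisjointCover_cons]
      _ = ∑ Y : Fin (k + 1) → Finset (Fin n) with IsDisjointCover Y X, ∏ i, e i (Y i) :=
          sum_equiv (Fin.consEquiv fun _ => Finset (Fin n)) (by simp [Fin.consEquiv]) (by simp)

noncomputable def rankedCoverSum (e : Fin k → Finset (Fin n) → R) (U : Finset (Fin n)) : R[X] :=
  ∑ Y : Fin k → Finset (Fin n) with univ.sup Y = U, C (∏ i, e i (Y i)) * X ^ ∑ i, #(Y i)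

theorem coeff_rankedCoverSum_card (e : Fin k → Finset (Fin n) → R) (U : Finset (Fin n)) :
    (rankedCoverSum e U).coeff #U = convProd (List.ofFn e) U := by
  simp only [rankedCoverSum, convProd_ofFn_apply, finsetSum_coeff, coeff_C_mul_X_pow,
    ← sum_filter, filter_filter, IsDisjointCover, eq_comm]

theorem prod_rankedZeta_eq_sum_rankedCoverSum (e : Fin k → Finset (Fin n) → R)
    (U : Finset (Fin n)) :
    ∏ i, rankedZeta (e i) U = ∑ V ∈ U.powerset, rankedCoverSum e V := by
  calc ∏ i, rankedZeta (e i) U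
      = ∑ Y ∈ Fintype.piFinset fun _ => U.powerset, ∏ i, C (e i (Y i)) * X ^ #(Y i) :=
        prod_univ_sum _ _
    _ = ∑ Y : Fin k → Finset (Fin n) with univ.sup Y ⊆ U,
          ∑ V ∈ {univ.sup Y}, C (∏ i, e i (Y i)) * X ^ ∑ i, #(Y i) := by
        refine sum_congr (by ext; simp) fun Y _ => ?_
        rw [sum_singleton, prod_mul_distrib, map_prod, prod_pow_eq_pow_sum]
    _ = ∑ V ∈ U.powerset, rankedCoverSum e V :=
        sum_comm' fun Y V => by
          simp only [mem_filter, mem_univ, true_and, mem_singleton, mem_powerset]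
          grind

end RankedCover

/-- The coefficient of `[n]` in `e_1·e_2⋯e_k` equals the coefficient of `r^n` in
`Σ_{X ⊆ [n]} (-1)^{n-|X|} Π_{i=1}^k ê_{i,X}(r)`. -/
theorem convProd_coeff_univ_eq_rankedZeta {R : Type*} [CommRing R] {n k : ℕ}
    (e : Fin k → Finset (Fin n) → R) :
    convProd (List.ofFn e) Finset.univ =
      (∑ X : Finset (Fin n),
          (-1 : Polynomial R) ^ (n - X.card) * ∏ i, rankedZeta (e i) X).coeff n := by
  have hsign (X : Finset (Fin n)) : n - #X = #Xᶜ := by rw [card_compl, Fintype.card_fin]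
  simp_rw [prod_rankedZeta_eq_sum_rankedCoverSum, hsign,
    sum_neg_one_pow_card_compl_mul_sum_powerset]
  rw [← coeff_rankedCoverSum_card, card_univ, Fintype.card_fin]
end

section
/- The ranked zeta transform is multiplicative on the convolution ring: for e, f ∈ R[U_n] with product (e·f)_X = Σ_{Y⊆X} e_Y f_{X∖Y}, and any subset X ⊆ [n], the coefficient of r^{|X|} in ê_X(r)·f̂_X(r), summed with signs Σ_{Y⊆X}(-1)^{|X|-|Y|}[r^{|X|}](ê_Y(r) f̂_Y(r)), equals (e·f)_X. -/
open scoped Classical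
open Polynomial

/-!
The coefficient of `r^k` in `ê_Y(r) f̂_Y(r)` sums `e_A f_B` over the pairs `A, B ⊆ Y` with
`|A| + |B| = k`; grouping these pairs by `A ∪ B` exhibits it as the zeta transform, in `Y`, of the
sum over pairs covering a set `Z`. Möbius inversion on the Boolean lattice, whose Möbius function is
`(-1)^(|X| - |Y|)`, recovers that sum at `Z = X`, and for `k = |X|` a pair covering `X` is exactly
a pair `(A, X ∖ A)`.
-/

open Finset

section BooleanMoebius

variable {α R : Type*} [DecidableEq α] [Ring R]

theorem sum_Icc_neg_one_pow_card_sub {s t : Finset α} (hst : s ⊆ t) :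
    ∑ u ∈ Icc s t, (-1 : R) ^ (#t - #u) = if s = t then 1 else 0 := by
  have hreflect : ∑ u ∈ Icc s t, (-1 : R) ^ (#t - #u) = ∑ v ∈ (t \ s).powerset, (-1 : R) ^ #v :=
    sum_nbij' (t \ ·) (t \ ·) (fun u hu => by simp only [mem_Icc, mem_powerset] at hu ⊢; grind)
      (fun v hv => by simp only [mem_Icc, mem_powerset] at hv ⊢; grind)
      (fun u hu => Finset.sdiff_sdiff_eq_self (mem_Icc.1 hu).2)
      (fun v hv => Finset.sdiff_sdiff_eq_self ((mem_powerset.1 hv).trans sdiff_subset))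
      (fun u hu => by rw [card_sdiff_of_subset (mem_Icc.1 hu).2])
  have hint := congrArg (Int.cast : ℤ → R) (sum_powerset_neg_one_pow_card (x := t \ s))
  push_cast at hint
  have hempty : t \ s = ∅ ↔ s = t := sdiff_eq_empty_iff_subset.trans ⟨hst.antisymm, (·.ge)⟩
  simp only [hreflect, hint, hempty]

theorem sum_powerset_neg_one_pow_mul_sum_powerset (g : Finset α → R) (t : Finset α) :
    ∑ u ∈ t.powerset, (-1 : R) ^ (#t - #u) * ∑ s ∈ u.powerset, g s = g t := by
  calc ∑ u ∈ t.powerset, (-1 : R) ^ (#t - #u) * ∑ s ∈ u.powerset, g s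
      = ∑ s ∈ t.powerset, ∑ u ∈ Icc s t, (-1 : R) ^ (#t - #u) * g s := by
        simp_rw [mul_sum]
        exact sum_comm' fun u s => by simp only [mem_powerset, mem_Icc]; grind
    _ = ∑ s ∈ t.powerset, (if s = t then 1 else 0) * g s :=
        sum_congr rfl fun s hs => by rw [← sum_mul, sum_Icc_neg_one_pow_card_sub (mem_powerset.1 hs)]
    _ = g t := by simp

end BooleanMoebius

section Covering

variable {α : Type*} [DecidableEq α]

theorem union_eq_and_card_add_card_eq_iff {s t u : Finset α} (hs : s ⊆ u) :
    s ∪ t = u ∧ #s + #t = #u ↔ t = u \ s := by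
  constructor
  · rintro ⟨rfl, hcard⟩
    exact (union_sdiff_cancel_left (card_union_eq_card_add_card.1 hcard.symm)).symm
  · rintro rfl
    exact ⟨union_sdiff_of_subset hs, (add_comm _ _).trans (card_sdiff_add_card_eq_card hs)⟩

theorem sum_powerset_product_eq_sum_powerset_sum_union_eq {M : Type*} [AddCommMonoid M]
    (F : Finset α × Finset α → M) (t : Finset α) :
    ∑ p ∈ t.powerset ×ˢ t.powerset, F p =
      ∑ u ∈ t.powerset, ∑ p ∈ u.powerset ×ˢ u.powerset with p.1 ∪ p.2 = u, F p := by
  rw [← sum_fiberwise_of_maps_to (g := fun p => p.1 ∪ p.2) (t := t.powerset)]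
  · refine sum_congr rfl fun u hu => sum_congr (ext fun p => ?_) fun _ _ => rfl
    simp only [mem_filter, mem_product, mem_powerset] at hu ⊢
    grind
  · intro p hp
    simp only [mem_product, mem_powerset] at hp ⊢
    exact union_subset hp.1 hp.2

variable {R : Type*} [CommSemiring R]

def coveringConv (e f : Finset α → R) (k : ℕ) (u : Finset α) : R :=
  ∑ p ∈ u.powerset ×ˢ u.powerset with p.1 ∪ p.2 = u ∧ #p.1 + #p.2 = k, e p.1 * f p.2

theorem coveringConv_card_self (e f : Finset α → R) (u : Finset α) :
    coveringConv e f #u u = ∑ s ∈ u.powerset, e s * f (u \ s) := by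
  rw [coveringConv, sum_filter, sum_product]
  refine sum_congr rfl fun s hs => ?_
  simp_rw [union_eq_and_card_add_card_eq_iff (mem_powerset.1 hs)]
  exact sum_ite_eq' _ _ _ |>.trans (if_pos (mem_powerset.2 sdiff_subset))

end Covering

theorem coeff_rankedZeta_mul_rankedZeta {R : Type*} [CommRing R] {n : ℕ}
    (e f : Finset (Fin n) → R) (Y : Finset (Fin n)) (k : ℕ) :
    (rankedZeta e Y * rankedZeta f Y).coeff k =
      ∑ p ∈ Y.powerset ×ˢ Y.powerset with #p.1 + #p.2 = k, e p.1 * f p.2 := by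
  simp only [rankedZeta, sum_mul_sum, ← sum_product', finsetSum_coeff, sum_filter]
  refine sum_congr rfl fun p _ => ?_
  rw [mul_mul_mul_comm, ← C_mul, ← pow_add, coeff_C_mul_X_pow]
  exact if_congr eq_comm rfl rfl

theorem coeff_rankedZeta_mul_rankedZeta_eq_sum_coveringConv {R : Type*} [CommRing R] {n : ℕ}
    (e f : Finset (Fin n) → R) (Y : Finset (Fin n)) (k : ℕ) :
    (rankedZeta e Y * rankedZeta f Y).coeff k = ∑ Z ∈ Y.powerset, coveringConv e f k Z := by
  rw [coeff_rankedZeta_mul_rankedZeta, sum_filter,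
    sum_powerset_product_eq_sum_powerset_sum_union_eq]
  simp only [coveringConv, sum_filter, ite_and]

/-- The ranked zeta transform is multiplicative for the convolution product:
`(e·f)_X = Σ_{Y⊆X} (-1)^{|X|-|Y|} [r^{|X|}] (ê_Y(r) · f̂_Y(r))`. -/
theorem convMul_eq_rankedZeta_inversion {R : Type*} [CommRing R] {n : ℕ}
    (e f : Finset (Fin n) → R) (X : Finset (Fin n)) :
    convMul e f X =
      ∑ Y ∈ X.powerset,
        (-1 : R) ^ (X.card - Y.card) * (rankedZeta e Y * rankedZeta f Y).coeff X.card := by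
  simp only [coeff_rankedZeta_mul_rankedZeta_eq_sum_coveringConv,
    sum_powerset_neg_one_pow_mul_sum_powerset, coveringConv_card_self, convMul]
end
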